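/- For every N≥0 the function V^N = 𝕄^N h is concave on S^M, and the pointwise limit V₀(π)=lim_{N→∞}(𝕄^N h)(π) is concave on S^M. -/

import Mathlib

open MeasureTheory Finset Filter
open scoped ENNReal

noncomputable section

/-- The analytic data of the change-diagnosis problem: a σ-finite reference measure `m`
on the observation space, probability densities `f₀, …, f_M`, the geometric parameter
`p ∈ (0,1)`, the prior `ν` on the change index, the delay cost `c > 0` and the
terminal-decision costs `a_{ij}` (with `a_{ii} = 0`). -/
structure DiagSetup (E : Type*) [MeasurableSpace E] (M : ℕ) : Type _ where
  /-- σ-finite reference measure -/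
  m : Measure E
  hm : SigmaFinite m
  /-- `f 0` is the pre-change density, `f i.succ` the post-change densities -/
  f : Fin (M + 1) → E → ℝ
  hf_meas : ∀ i, Measurable (f i)
  hf_nonneg : ∀ i x, 0 ≤ f i x
  hf_int : ∀ i, ∫ x, f i x ∂m = 1
  p : ℝ
  hp : p ∈ Set.Ioo (0 : ℝ) 1
  ν : Fin M → ℝ
  hν : ∀ i, 0 < ν i
  hνsum : ∑ i, ν i = 1
  c : ℝ
  hc : 0 < c
  a : Fin (M + 1) → Fin M → ℝ
  ha : ∀ i j, 0 ≤ a i j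
  haii : ∀ i : Fin M, a i.succ i = 0
  hM : 1 ≤ M

namespace DiagSetup

variable {E : Type*} [MeasurableSpace E] {M : ℕ}

/-- `D_i(π, x)`:  `D₀(π,x) = (1-p)π₀f₀(x)` and `D_i(π,x) = (π_i + π₀ p ν_i) f_i(x)`. -/
def D (S : DiagSetup E M) (i : Fin (M + 1)) (π : Fin (M + 1) → ℝ) (x : E) : ℝ :=
  Fin.cases ((1 - S.p) * π 0 * S.f 0 x)
    (fun j => (π j.succ + π 0 * S.p * S.ν j) * S.f j.succ x) i

/-- `D(π, x) = Σ_{i=0}^M D_i(π, x)`. -/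
def Dsum (S : DiagSetup E M) (π : Fin (M + 1) → ℝ) (x : E) : ℝ :=
  ∑ i, S.D i π x

/-- The operator `T`:
`(Tg)(π) = ∫_E D(π,x) g(D₀(π,x)/D(π,x), …, D_M(π,x)/D(π,x)) m(dx)`,
with the integrand interpreted as `0` where `D(π,x) = 0`. -/
def T (S : DiagSetup E M) (g : (Fin (M + 1) → ℝ) → ℝ) (π : Fin (M + 1) → ℝ) : ℝ :=
  ∫ x, (if S.Dsum π x = 0 then 0
        else S.Dsum π x * g fun i => S.D i π x / S.Dsum π x) ∂S.m

/-- `h_j(π) = Σ_{i=0}^M π_i a_{ij}`. -/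
def hj (S : DiagSetup E M) (j : Fin M) (π : Fin (M + 1) → ℝ) : ℝ :=
  ∑ i : Fin (M + 1), π i * S.a i j

/-- `h(π) = min_{j∈{1,…,M}} h_j(π)`. -/
def hmin (S : DiagSetup E M) (π : Fin (M + 1) → ℝ) : ℝ :=
  ⨅ j : Fin M, S.hj j π

/-- The dynamic-programming operator `(𝕄g)(π) = min{h(π), c(1-π₀) + (Tg)(π)}`. -/
def Mop (S : DiagSetup E M) (g : (Fin (M + 1) → ℝ) → ℝ) (π : Fin (M + 1) → ℝ) : ℝ :=
  min (S.hmin π) (S.c * (1 - π 0) + S.T g π)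

/-- `V^N = 𝕄^N h`, the value functions of the truncated problems. -/
def V (S : DiagSetup E M) (N : ℕ) : (Fin (M + 1) → ℝ) → ℝ :=
  S.Mop^[N] S.hmin

end DiagSetup

/-!
`𝕄` preserves concavity on the simplex. `h` is a minimum of linear functions and `c(1 - π₀)` is
affine. The integrand of `T g` is `P g (D(π, x))`, where `P g w = (∑ w) g(w / ∑ w)` is the
perspective of `g` and `π ↦ D(π, x)` is linear. The perspective of a concave function is
positively homogeneous and superadditive on the nonnegative orthant, hence concave there, and
integrating in `x` keeps concavity. Concavity then passes to the pointwise limit `V₀`.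
The bounds `0 ≤ V^N ≤ h` carried along the induction bound the integrand of `T V^N` by
`(∑ᵢ a_{i1}) D(π, x)`, which makes it integrable.
-/

section Perspective

variable {ι : Type*} [Fintype ι] {g : (ι → ℝ) → ℝ}

/-- Set to `0` where `∑ w = 0`, as in the integrand of `DiagSetup.T`. -/
def perspective (g : (ι → ℝ) → ℝ) (w : ι → ℝ) : ℝ :=
  if ∑ i, w i = 0 then 0 else (∑ i, w i) * g fun i => w i / ∑ j, w j

lemma div_sum_mem_stdSimplex {w : ι → ℝ} (hw : 0 ≤ w) (h : ∑ i, w i ≠ 0) :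
    (fun i => w i / ∑ j, w j) ∈ stdSimplex ℝ ι :=
  ⟨fun i => div_nonneg (hw i) (sum_nonneg fun j _ => hw j), by rw [← sum_div, div_self h]⟩

lemma perspective_nonneg (hg : ∀ y ∈ stdSimplex ℝ ι, 0 ≤ g y) {w : ι → ℝ} (hw : 0 ≤ w) :
    0 ≤ perspective g w := by
  unfold perspective
  split_ifs with h
  · exact le_rfl
  · exact mul_nonneg (sum_nonneg fun i _ => hw i) (hg _ (div_sum_mem_stdSimplex hw h))

lemma abs_perspective_le {B : ℝ} (hB : ∀ y ∈ stdSimplex ℝ ι, |g y| ≤ B) {w : ι → ℝ}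
    (hw : 0 ≤ w) : |perspective g w| ≤ B * ∑ i, w i := by
  have hsum : 0 ≤ ∑ i, w i := sum_nonneg fun i _ => hw i
  unfold perspective
  split_ifs with h
  · rw [h, abs_zero, mul_zero]
  · rw [abs_mul, abs_of_nonneg hsum, mul_comm]
    exact mul_le_mul_of_nonneg_right (hB _ (div_sum_mem_stdSimplex hw h)) hsum

lemma perspective_smul (g : (ι → ℝ) → ℝ) {c : ℝ} (hc : 0 ≤ c) (w : ι → ℝ) :
    perspective g (c • w) = c * perspective g w := by
  rcases hc.eq_or_lt with rfl | hc
  · simp [perspective]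
  · simp only [perspective, Pi.smul_apply, smul_eq_mul, ← mul_sum, mul_eq_zero, hc.ne',
      false_or]
    split_ifs
    · rw [mul_zero]
    · simp_rw [mul_div_mul_left _ _ hc.ne']
      ring

lemma perspective_add_le (hg : ConcaveOn ℝ (stdSimplex ℝ ι) g) {u v : ι → ℝ}
    (hu : 0 ≤ u) (hv : 0 ≤ v) : perspective g u + perspective g v ≤ perspective g (u + v) := by
  by_cases hU : ∑ i, u i = 0
  · obtain rfl : u = 0 := funext fun i => (sum_eq_zero_iff_of_nonneg fun i _ => hu i).1 hU i
      (mem_univ i)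
    simp [perspective]
  by_cases hV : ∑ i, v i = 0
  · obtain rfl : v = 0 := funext fun i => (sum_eq_zero_iff_of_nonneg fun i _ => hv i).1 hV i
      (mem_univ i)
    simp [perspective]
  have hUpos : 0 < ∑ i, u i := (sum_nonneg fun i _ => hu i).lt_of_ne' hU
  have hVpos : 0 < ∑ i, v i := (sum_nonneg fun i _ => hv i).lt_of_ne' hV
  have hsum : ∑ i, (u + v) i = ∑ i, u i + ∑ i, v i := sum_add_distrib
  rw [perspective, perspective, perspective, if_neg hU, if_neg hV, hsum,
    if_neg (add_pos hUpos hVpos).ne']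
  set U := ∑ i, u i
  set V := ∑ i, v i
  have hmix := hg.2 (div_sum_mem_stdSimplex hu hU) (div_sum_mem_stdSimplex hv hV)
    (by positivity : 0 ≤ U / (U + V)) (by positivity : 0 ≤ V / (U + V))
    (by field_simp : U / (U + V) + V / (U + V) = 1)
  have hcomb : (U / (U + V)) • (fun i => u i / U) + (V / (U + V)) • (fun i => v i / V)
      = fun i => (u + v) i / (U + V) := by
    ext i
    simp only [Pi.add_apply, Pi.smul_apply, smul_eq_mul]
    field_simp
  rw [hcomb] at hmix
  calc U * g (fun i => u i / U) + V * g (fun i => v i / V)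
      = (U + V) * ((U / (U + V)) • g (fun i => u i / U) + (V / (U + V)) • g fun i => v i / V) :=
        by
        simp only [smul_eq_mul]
        field_simp
    _ ≤ (U + V) * g fun i => (u + v) i / (U + V) := by gcongr

lemma concaveOn_perspective (hg : ConcaveOn ℝ (stdSimplex ℝ ι) g) :
    ConcaveOn ℝ (Set.Ici 0) (perspective g) :=
  ⟨convex_Ici 0, fun _ hu _ hv _ _ ha hb _ => by
    rw [smul_eq_mul, smul_eq_mul, ← perspective_smul g ha, ← perspective_smul g hb]
    exact perspective_add_le hg (smul_nonneg ha hu) (smul_nonneg hb hv)⟩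

lemma measurable_perspective (hg : Measurable g) : Measurable (perspective g) := by
  have hsum : Measurable fun w : ι → ℝ => ∑ i, w i := by fun_prop
  exact Measurable.ite (hsum (measurableSet_singleton 0)) measurable_const
    (hsum.mul (hg.comp (measurable_pi_lambda _ fun i => (measurable_pi_apply i).div hsum)))

end Perspective

section ConcaveOn

variable {X : Type*} [AddCommMonoid X] [Module ℝ X] {s : Set X}

lemma concaveOn_iInf {κ : Type*} [Finite κ] [Nonempty κ] {f : κ → X → ℝ}
    (hf : ∀ j, ConcaveOn ℝ s (f j)) : ConcaveOn ℝ s fun x => ⨅ j, f j x :=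
  ⟨(hf (Classical.arbitrary κ)).1, fun x hx y hy a b ha hb hab => le_ciInf fun j => by
    simp only [smul_eq_mul]
    calc a * (⨅ j, f j x) + b * ⨅ j, f j y ≤ a * f j x + b * f j y := by
          gcongr <;> exact ciInf_le (Set.finite_range _).bddBelow j
      _ ≤ f j (a • x + b • y) := by simpa only [smul_eq_mul] using (hf j).2 hx hy ha hb hab⟩

lemma concaveOn_integral {α : Type*} [MeasurableSpace α] {μ : Measure α} {F : X → α → ℝ}
    (hs : Convex ℝ s) (hF : ∀ z, ConcaveOn ℝ s fun x => F x z)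
    (hint : ∀ x ∈ s, Integrable (F x) μ) : ConcaveOn ℝ s fun x => ∫ z, F x z ∂μ := by
  refine ⟨hs, fun x hx y hy a b ha hb hab => ?_⟩
  have hx' := (hint x hx).const_mul a
  have hy' := (hint y hy).const_mul b
  simp only [smul_eq_mul]
  rw [← integral_const_mul, ← integral_const_mul, ← integral_add hx' hy']
  exact integral_mono (hx'.add hy') (hint _ (hs hx hy ha hb hab))
    fun z => by simpa only [smul_eq_mul] using (hF z).2 hx hy ha hb hab

lemma concaveOn_of_tendsto {κ : Type*} {l : Filter κ} [l.NeBot] {F : κ → X → ℝ} {f : X → ℝ}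
    (hF : ∀ n, ConcaveOn ℝ s (F n))
    (hlim : ∀ x ∈ s, Tendsto (fun n => F n x) l (nhds (f x))) : ConcaveOn ℝ s f := by
  obtain ⟨n⟩ := nonempty_of_neBot l
  refine ⟨(hF n).1, fun x hx y hy a b ha hb hab => ?_⟩
  exact le_of_tendsto_of_tendsto' (((hlim x hx).const_smul a).add ((hlim y hy).const_smul b))
    (hlim _ ((hF n).1 hx hy ha hb hab)) fun n => (hF n).2 hx hy ha hb hab

end ConcaveOn

namespace DiagSetup

variable {E : Type*} [MeasurableSpace E] {M : ℕ} (S : DiagSetup E M)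
  {g : (Fin (M + 1) → ℝ) → ℝ} {π : Fin (M + 1) → ℝ}

def Dvec (x : E) : (Fin (M + 1) → ℝ) →ₗ[ℝ] Fin (M + 1) → ℝ where
  toFun π i := S.D i π x
  map_add' π q := by
    ext i
    cases i using Fin.cases <;>
      simp only [D, Fin.cases_zero, Fin.cases_succ, Pi.add_apply] <;> ring
  map_smul' c π := by
    ext i
    cases i using Fin.cases <;>
      simp only [D, Fin.cases_zero, Fin.cases_succ, Pi.smul_apply, smul_eq_mul,
        RingHom.id_apply] <;> ring

lemma Dvec_apply (x : E) (i : Fin (M + 1)) : S.Dvec x π i = S.D i π x := rfl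

lemma T_eq_integral_perspective (g : (Fin (M + 1) → ℝ) → ℝ) :
    S.T g = fun π => ∫ x, perspective g (S.Dvec x π) ∂S.m := rfl

lemma Dvec_nonneg (hπ : π ∈ stdSimplex ℝ (Fin (M + 1))) (x : E) : 0 ≤ S.Dvec x π := by
  intro i
  have hp := S.hp
  cases i using Fin.cases with
  | zero => exact mul_nonneg (mul_nonneg (by linarith [hp.2]) (hπ.1 0)) (S.hf_nonneg 0 x)
  | succ j =>
    exact mul_nonneg (add_nonneg (hπ.1 j.succ)
      (mul_nonneg (mul_nonneg (hπ.1 0) hp.1.le) (S.hν j).le)) (S.hf_nonneg j.succ x)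

lemma measurable_Dvec : Measurable fun z : (Fin (M + 1) → ℝ) × E => S.Dvec z.2 z.1 := by
  have hf := S.hf_meas
  refine measurable_pi_lambda _ fun i => ?_
  cases i using Fin.cases <;>
    simp only [Dvec_apply, D, Fin.cases_zero, Fin.cases_succ] <;> fun_prop

lemma integrable_Dvec_apply (π : Fin (M + 1) → ℝ) (i : Fin (M + 1)) :
    Integrable (fun x => S.Dvec x π i) S.m := by
  have hf (k : Fin (M + 1)) : Integrable (S.f k) S.m :=
    .of_integral_ne_zero (by rw [S.hf_int k]; exact one_ne_zero)
  cases i using Fin.cases with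
  | zero => exact (hf 0).const_mul _
  | succ j => exact (hf j.succ).const_mul _

lemma integrable_perspective_Dvec (hg : Measurable g) {B : ℝ}
    (hB : ∀ y ∈ stdSimplex ℝ (Fin (M + 1)), |g y| ≤ B) (hπ : π ∈ stdSimplex ℝ (Fin (M + 1))) :
    Integrable (fun x => perspective g (S.Dvec x π)) S.m :=
  ((integrable_finsetSum univ fun i _ => S.integrable_Dvec_apply π i).const_mul B).mono'
    ((measurable_perspective hg).comp
      (S.measurable_Dvec.comp measurable_prodMk_left)).aestronglyMeasurable
    (ae_of_all _ fun x => abs_perspective_le hB (S.Dvec_nonneg hπ x))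

lemma measurable_T (hg : Measurable g) : Measurable (S.T g) := by
  have := S.hm
  rw [T_eq_integral_perspective]
  exact ((measurable_perspective hg).comp S.measurable_Dvec).stronglyMeasurable
    |>.integral_prod_right' |>.measurable

lemma concaveOn_T (hg : Measurable g) (hgc : ConcaveOn ℝ (stdSimplex ℝ (Fin (M + 1))) g)
    {B : ℝ} (hB : ∀ y ∈ stdSimplex ℝ (Fin (M + 1)), |g y| ≤ B) :
    ConcaveOn ℝ (stdSimplex ℝ (Fin (M + 1))) (S.T g) := by
  rw [T_eq_integral_perspective]
  exact concaveOn_integral (convex_stdSimplex ℝ _)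
      (fun x => ((concaveOn_perspective hgc).comp_linearMap (S.Dvec x)).subset
        (fun _ hπ => S.Dvec_nonneg hπ x) (convex_stdSimplex ℝ _))
      fun _ hπ => S.integrable_perspective_Dvec hg hB hπ

lemma T_nonneg (hg : ∀ y ∈ stdSimplex ℝ (Fin (M + 1)), 0 ≤ g y)
    (hπ : π ∈ stdSimplex ℝ (Fin (M + 1))) : 0 ≤ S.T g π := by
  rw [T_eq_integral_perspective]
  exact integral_nonneg fun x => perspective_nonneg hg (S.Dvec_nonneg hπ x)

lemma concaveOn_hj (j : Fin M) : ConcaveOn ℝ (stdSimplex ℝ (Fin (M + 1))) (S.hj j) := by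
  refine ⟨convex_stdSimplex ℝ _, fun π _ q _ a b _ _ _ => le_of_eq ?_⟩
  simp only [hj, Pi.add_apply, Pi.smul_apply, smul_eq_mul, mul_sum, ← sum_add_distrib]
  exact sum_congr rfl fun i _ => by ring

lemma concaveOn_hmin : ConcaveOn ℝ (stdSimplex ℝ (Fin (M + 1))) S.hmin := by
  have : Nonempty (Fin M) := ⟨⟨0, S.hM⟩⟩
  exact concaveOn_iInf S.concaveOn_hj

lemma measurable_hmin : Measurable S.hmin :=
  Measurable.iInf fun _ => measurable_sum _ fun i _ => (measurable_pi_apply i).mul_const _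

lemma hmin_nonneg (hπ : π ∈ stdSimplex ℝ (Fin (M + 1))) : 0 ≤ S.hmin π := by
  have : Nonempty (Fin M) := ⟨⟨0, S.hM⟩⟩
  exact le_ciInf fun j => sum_nonneg fun i _ => mul_nonneg (hπ.1 i) (S.ha i j)

lemma hmin_le_sum (hπ : π ∈ stdSimplex ℝ (Fin (M + 1))) (j : Fin M) :
    S.hmin π ≤ ∑ i, S.a i j :=
  (ciInf_le (Set.finite_range _).bddBelow j).trans <| sum_le_sum fun i _ =>
    mul_le_of_le_one_left (S.ha i j) (mem_Icc_of_mem_stdSimplex hπ i).2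

structure Admissible (g : (Fin (M + 1) → ℝ) → ℝ) : Prop where
  measurable : Measurable g
  concaveOn : ConcaveOn ℝ (stdSimplex ℝ (Fin (M + 1))) g
  nonneg : ∀ π ∈ stdSimplex ℝ (Fin (M + 1)), 0 ≤ g π
  le_hmin : ∀ π ∈ stdSimplex ℝ (Fin (M + 1)), g π ≤ S.hmin π

lemma admissible_hmin : S.Admissible S.hmin :=
  ⟨S.measurable_hmin, S.concaveOn_hmin, fun _ => S.hmin_nonneg, fun _ _ => le_rfl⟩

lemma Admissible.Mop {S : DiagSetup E M} (hg : S.Admissible g) : S.Admissible (S.Mop g) := by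
  have hB (π) (hπ : π ∈ stdSimplex ℝ (Fin (M + 1))) : |g π| ≤ ∑ i, S.a i ⟨0, S.hM⟩ :=
    (abs_of_nonneg (hg.nonneg π hπ)).trans_le ((hg.le_hmin π hπ).trans (S.hmin_le_sum hπ _))
  have hdelay : ConcaveOn ℝ (stdSimplex ℝ (Fin (M + 1))) fun π => S.c * (1 - π 0) :=
    ⟨convex_stdSimplex ℝ _, fun π _ q _ a b _ _ hab => le_of_eq <| by
      simp only [Pi.add_apply, Pi.smul_apply, smul_eq_mul]
      linear_combination S.c * hab⟩
  refine ⟨?_, S.concaveOn_hmin.inf (hdelay.add (S.concaveOn_T hg.measurable hg.concaveOn hB)),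
    fun π hπ => le_min (S.hmin_nonneg hπ) (add_nonneg ?_ (S.T_nonneg hg.nonneg hπ)),
    fun π _ => min_le_left _ _⟩
  · exact S.measurable_hmin.min
      (((measurable_const.sub (measurable_pi_apply 0)).const_mul _).add
        (S.measurable_T hg.measurable))
  · exact mul_nonneg S.hc.le (sub_nonneg.2 (mem_Icc_of_mem_stdSimplex hπ 0).2)

lemma admissible_V (N : ℕ) : S.Admissible (S.V N) := by
  induction N with
  | zero => exact S.admissible_hmin
  | succ N ih => rw [V, Function.iterate_succ_apply']; exact ih.Mop

end DiagSetup

/-- every truncated value function `V^N = 𝕄^N h` is concave on the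
simplex, and so is the pointwise limit `V₀ = lim_N 𝕄^N h`. -/
theorem value_functions_concave {E : Type*} [MeasurableSpace E] {M : ℕ}
    (S : DiagSetup E M) (V0 : (Fin (M + 1) → ℝ) → ℝ)
    (hV0 : ∀ π ∈ stdSimplex ℝ (Fin (M + 1)),
      Tendsto (fun N => S.V N π) atTop (nhds (V0 π))) :
    (∀ N : ℕ, ConcaveOn ℝ (stdSimplex ℝ (Fin (M + 1))) (S.V N)) ∧
    ConcaveOn ℝ (stdSimplex ℝ (Fin (M + 1))) V0 :=
  have hconcave (N : ℕ) := (S.admissible_V N).concaveOn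
  ⟨hconcave, concaveOn_of_tendsto hconcave hV0⟩
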